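/- Let F be a facet contained in the closure of C, and for w ∈ W_F let ε_F(w) = +1 if w preserves a given orientation of F and −1 if it reverses it (a character of W_F trivial on Q^⊥). Then the R[a,b]-linear map j_F : H_F → H_F, T_w ↦ ε_F(w) T_w, is an involutive algebra automorphism of H_F acting trivially on 𝔷. -/

import Mathlib

/-!
Statement 10: for a facet `F` in the closure of the standard chamber (of type
`J = S_F ⊆ S_aff`) and the orientation character `ε_F : W_F → {±1}` (trivial on
`W⁰_F` — whose elements fix `F` pointwise — and on `Q^⊥`), the `R[a,b]`-linear map
`j_F : H_F → H_F`, `T_w ↦ ε_F(w) T_w`, is an involutive algebra automorphism of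
`H_F` acting trivially on `𝔷 = R[a,b][Q^⊥]`.
-/

open scoped Classical

/-- The combinatorial data of an extended affine Weyl group attached to a reduced based
root system: a group `W` containing the affine Weyl group `Waff`, which is a Coxeter group
with simple reflections `S` (= `S_aff`), the length function `len` extending the Coxeter
length, and the abelian subgroup `Omega` of length-zero elements with `W = Ω ⋉ W_aff`. -/
structure ExtAffWeyl where
  W : Type
  [grp : Group W]
  B : Type
  M : CoxeterMatrix B
  Waff : Subgroup W
  cs : CoxeterSystem M Waff
  S : Set W
  S_eq : S = Set.range fun b => ((cs.simple b : Waff) : W)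
  S_sub : ∀ s ∈ S, s ∈ Waff
  S_inv : ∀ s ∈ S, s⁻¹ ∈ S
  S_fin : S.Finite
  len : W → ℕ
  len_aff : ∀ u : Waff, len u = cs.length u
  Omega : Subgroup W
  Omega_comm : ∀ x ∈ Omega, ∀ y ∈ Omega, x * y = y * x
  Omega_eq : (Omega : Set W) = {w | len w = 0}
  decomp : ∀ w : W, ∃! p : Omega × Waff, (p.1 : W) * (p.2 : W) = w
  Omega_conj : ∀ ω ∈ Omega, ∀ s ∈ S, ω * s * ω⁻¹ ∈ S
  len_omul : ∀ ω ∈ Omega, ∀ w : W, len (ω * w) = len w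
  len_mulo : ∀ ω ∈ Omega, ∀ w : W, len (w * ω) = len w

attribute [instance] ExtAffWeyl.grp

/-- `R[a,b]`, the polynomial ring in the two parameters `a`, `b`. -/
abbrev Rab (R : Type) [CommRing R] : Type := MvPolynomial (Fin 2) R

/-- The parameter `a` of the generic Hecke algebra. -/
noncomputable def aa (R : Type) [CommRing R] : Rab R := MvPolynomial.X 0

/-- The parameter `b` of the generic Hecke algebra. -/
noncomputable def bb (R : Type) [CommRing R] : Rab R := MvPolynomial.X 1

/-- The generic affine Hecke algebra `H_{a,b}`: an `R[a,b]`-algebra, free as an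
`R[a,b]`-module with basis `{T_w : w ∈ W}`, subject to the braid relations and the
quadratic relations `(T_s − a)(T_s − b) = 0` for `s ∈ S_aff`. -/
structure GenericHecke (R : Type) [CommRing R] (G : ExtAffWeyl) where
  H : Type
  [ring : Ring H]
  [alg : Algebra (Rab R) H]
  T : G.W → H
  basis : Module.Basis G.W (Rab R) H
  basis_eq : ∀ w, basis w = T w
  braid : ∀ v w : G.W, G.len (v * w) = G.len v + G.len w → T v * T w = T (v * w)
  quad : ∀ s ∈ G.S,
    (T s - algebraMap (Rab R) H (aa R)) * (T s - algebraMap (Rab R) H (bb R)) = 0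

attribute [instance] GenericHecke.ring GenericHecke.alg
/-- Extension of the extended affine Weyl group data by the set of affine roots
`Φ_aff` with its positivity, the `W`-action, the reflections `s_A`, the simple affine
roots, and the basic compatibility of the length function with the action on affine
roots. -/
structure ExtAffWeylRoots extends ExtAffWeyl where
  AR : Type
  pos : Set AR
  act : W → AR → AR
  act_one : ∀ A, act 1 A = A
  act_mul : ∀ v w A, act (v * w) A = act v (act w A)
  refl : AR → W
  refl_mem : ∀ A, refl A ∈ Waff
  simples : Set AR
  simples_pos : simples ⊆ pos
  refl_simples : ∀ A ∈ simples, refl A ∈ S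
  refl_surj : ∀ s ∈ S, ∃ A ∈ simples, refl A = s
  len_add : ∀ A ∈ simples, ∀ w : W,
    (act w A ∈ pos → len (w * refl A) = len w + 1) ∧
    (act w A ∉ pos → len (w * refl A) + 1 = len w)

/-- The subgroup `W⁰_F` generated by the set `S_F = J` of simple reflections fixing
the facet `F` pointwise. -/
def W0F (G : ExtAffWeylRoots) (J : Set G.W) : Subgroup G.W := Subgroup.closure J

/-- The set `Φ_F⁺` of positive affine roots whose reflection fixes the facet `F`
(of type `J ⊆ S_aff`) pointwise. -/
def PhiFpos (G : ExtAffWeylRoots) (J : Set G.W) : Set G.AR :=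
  {A | A ∈ G.pos ∧ G.refl A ∈ W0F G J}

/-- The set `𝒟_F = {d ∈ W : d(Φ_F⁺) ⊆ Φ_aff⁺}` of distinguished coset representatives. -/
def DF (G : ExtAffWeylRoots) (J : Set G.W) : Set G.W :=
  {d | ∀ A ∈ PhiFpos G J, G.act d A ∈ G.pos}

/-- Further data: the subgroup `Q^⊥ = {x̌ ∈ X̌ : ⟨α, x̌⟩ = 0 ∀α ∈ Φ}` of `W`,
which is central in `W` and consists of length-zero elements. -/
structure ExtAffWeylQ extends ExtAffWeylRoots where
  Qperp : Subgroup W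
  Qperp_central : Qperp ≤ Subgroup.center W
  Qperp_len : ∀ q ∈ Qperp, len q = 0

/-- The subgroup `Ω_F` of `Ω` stabilizing the facet `F ⊆ C̄` of type `J = S_F`,
i.e. `{ω ∈ Ω : ω S_F ω⁻¹ = S_F}`, as a subset of `W`. -/
def OmegaF (G : ExtAffWeylQ) (J : Set G.W) : Set G.W :=
  {ω | ω ∈ G.Omega ∧ (fun x => ω * x * ω⁻¹) '' J = J}

/-- The subgroup `W_F = W⁰_F ⋊ Ω_F = {w ∈ W : wF = F}`. -/
def WF (G : ExtAffWeylQ) (J : Set G.W) : Subgroup G.W :=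
  Subgroup.closure (J ∪ OmegaF G J)

/-- The subalgebra `H_F ⊆ H_{a,b}` spanned by the `T_w`, `w ∈ W_F`. -/
noncomputable def HF (R : Type) [CommRing R] (G : ExtAffWeylQ)
    (𝓗 : GenericHecke R G.toExtAffWeyl) (J : Set G.W) : Subalgebra (Rab R) 𝓗.H :=
  Algebra.adjoin (Rab R) (𝓗.T '' ((WF G J : Subgroup G.W) : Set G.W))

/-- The central subalgebra `𝔷 = R[a,b][Q^⊥] ⊆ H_{a,b}`. -/
noncomputable def zz (R : Type) [CommRing R] (G : ExtAffWeylQ)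
    (𝓗 : GenericHecke R G.toExtAffWeyl) : Subalgebra (Rab R) 𝓗.H :=
  Algebra.adjoin (Rab R) (𝓗.T '' ((G.Qperp : Subgroup G.W) : Set G.W))

/-! ### Auxiliary lemmas -/

section Aux

variable (G : ExtAffWeylQ)

namespace Stmt10

lemma len_one : G.len 1 = 0 := by
  have h := G.len_aff 1
  simpa using h

lemma len_s {s : G.W} (hs : s ∈ G.S) : G.len s = 1 := by
  rw [G.S_eq] at hs
  obtain ⟨b, rfl⟩ := hs
  rw [G.len_aff, G.cs.length_simple]

lemma s_mul_s {s : G.W} (hs : s ∈ G.S) : s * s = 1 := by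
  rw [G.S_eq] at hs
  obtain ⟨b, rfl⟩ := hs
  rw [← Subgroup.coe_mul, G.cs.simple_mul_simple_self, Subgroup.coe_one]

lemma wordProd_mem_closure (l : List G.B) :
    ((G.cs.wordProd l : G.Waff) : G.W) ∈ Subgroup.closure G.S := by
  induction l with
  | nil =>
      simp only [CoxeterSystem.wordProd_nil, Subgroup.coe_one]
      exact one_mem _
  | cons i l ih =>
      rw [G.cs.wordProd_cons, Subgroup.coe_mul]
      exact mul_mem (Subgroup.subset_closure (by rw [G.S_eq]; exact ⟨i, rfl⟩)) ih

lemma waff_eq_closure : G.Waff = Subgroup.closure G.S := by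
  apply le_antisymm
  · intro u hu
    obtain ⟨ω, -, hω⟩ := G.cs.exists_reduced_word' ⟨u, hu⟩
    have := wordProd_mem_closure G ω
    rwa [← hω] at this
  · rw [Subgroup.closure_le]
    intro s hs
    exact G.S_sub s hs

lemma omega_conj_waff {ω : G.W} (hω : ω ∈ G.Omega) {u : G.W} (hu : u ∈ G.Waff) :
    ω * u * ω⁻¹ ∈ G.Waff := by
  rw [waff_eq_closure] at hu ⊢
  induction hu using Subgroup.closure_induction with
  | mem s hs => exact Subgroup.subset_closure (G.Omega_conj ω hω s hs)
  | one => simpa using one_mem _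
  | mul x y hx hy ihx ihy =>
      have : ω * (x * y) * ω⁻¹ = (ω * x * ω⁻¹) * (ω * y * ω⁻¹) := by group
      rw [this]; exact mul_mem ihx ihy
  | inv x hx ihx =>
      have : ω * x⁻¹ * ω⁻¹ = (ω * x * ω⁻¹)⁻¹ := by group
      rw [this]; exact inv_mem ihx

/-- The canonical decomposition `w = ω · u` with `ω ∈ Ω`, `u ∈ W_aff`. -/
noncomputable def op (w : G.W) : G.Omega × G.Waff := (G.decomp w).exists.choose

lemma op_spec (w : G.W) : ((op G w).1 : G.W) * ((op G w).2 : G.W) = w :=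
  (G.decomp w).exists.choose_spec

lemma op_unique (w : G.W) (p : G.Omega × G.Waff) (h : (p.1 : G.W) * (p.2 : G.W) = w) :
    p = op G w := by
  obtain ⟨q, hq, huniq⟩ := G.decomp w
  rw [huniq p h, huniq (op G w) (op_spec G w)]

lemma op_mul (x y : G.W) : (op G (x * y)).1 = (op G x).1 * (op G y).1 := by
  have hx := op_spec G x
  have hy := op_spec G y
  set ωx := (op G x).1; set ax := (op G x).2
  set ωy := (op G y).1; set ay := (op G y).2
  have hu : (ωy : G.W)⁻¹ * (ax : G.W) * (ωy : G.W) ∈ G.Waff := by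
    have := omega_conj_waff G (inv_mem ωy.2) ax.2
    simpa using this
  have key : (((ωx * ωy : G.Omega) : G.W)) *
      (((⟨_, hu⟩ * ay : G.Waff) : G.W)) = x * y := by
    push_cast
    rw [← hx, ← hy]
    group
  have := op_unique G (x * y) (ωx * ωy, ⟨_, hu⟩ * ay) key
  exact (congrArg Prod.fst this).symm

lemma op_waff {u : G.W} (hu : u ∈ G.Waff) : (op G u).1 = 1 := by
  have := op_unique G u (1, ⟨u, hu⟩) (by simp)
  exact (congrArg Prod.fst this).symm

lemma op_omega {ω : G.W} (hω : ω ∈ G.Omega) : (op G ω).1 = ⟨ω, hω⟩ := by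
  have := op_unique G ω (⟨ω, hω⟩, 1) (by simp)
  exact (congrArg Prod.fst this).symm

lemma len_coe_waff (u : G.Waff) : G.len u = G.cs.length u := G.len_aff u

lemma len_omega_zero {ω : G.W} (hω : ω ∈ G.Omega) : G.len ω = 0 := by
  have : ω ∈ (G.Omega : Set G.W) := hω
  rw [G.Omega_eq] at this
  exact this

/-- Length behaviour of right multiplication by a simple reflection, in `W`. -/
lemma len_mul_simple (x : G.W) (i : G.B) :
    G.len (x * G.cs.simple i) = G.len x + 1 ∨
    G.len (x * G.cs.simple i) + 1 = G.len x := by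
  have hx := op_spec G x
  set ω := (op G x).1; set a := (op G x).2
  have h1 : x * (G.cs.simple i : G.W) = (ω : G.W) * ((a * G.cs.simple i : G.Waff) : G.W) := by
    push_cast; rw [← hx]; group
  have h2 : G.len (x * G.cs.simple i) = G.cs.length (a * G.cs.simple i) := by
    rw [h1, G.len_omul _ ω.2, len_coe_waff]
  have h3 : G.len x = G.cs.length a := by
    conv_lhs => rw [← hx]
    rw [G.len_omul _ ω.2, len_coe_waff]
  rw [h2, h3]
  exact G.cs.length_mul_simple a i

/-! #### The stabilizer `Ω_F` and the decomposition of `W_F` -/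

variable {G}

lemma OmegaF_mem_omega {J : Set G.W} {ω : G.W} (h : ω ∈ OmegaF G J) : ω ∈ G.Omega := h.1

lemma conj_mem_J_iff {J : Set G.W} {ω : G.W} (h : ω ∈ OmegaF G J) (x : G.W) :
    ω * x * ω⁻¹ ∈ J ↔ x ∈ J := by
  constructor
  · intro hx
    rw [← h.2] at hx
    obtain ⟨y, hy, hxy⟩ := hx
    have hyx : y = x := by
      have h' := hxy
      exact mul_left_cancel (mul_right_cancel h')
    rwa [← hyx]
  · intro hx
    rw [← h.2]
    exact ⟨x, hx, rfl⟩

lemma one_mem_OmegaF {J : Set G.W} : (1 : G.W) ∈ OmegaF G J := by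
  refine ⟨one_mem _, ?_⟩
  simp

lemma mul_mem_OmegaF {J : Set G.W} {ω₁ ω₂ : G.W} (h₁ : ω₁ ∈ OmegaF G J)
    (h₂ : ω₂ ∈ OmegaF G J) : ω₁ * ω₂ ∈ OmegaF G J := by
  refine ⟨mul_mem h₁.1 h₂.1, ?_⟩
  ext z
  constructor
  · rintro ⟨x, hx, rfl⟩
    show ω₁ * ω₂ * x * (ω₁ * ω₂)⁻¹ ∈ J
    have heq : ω₁ * ω₂ * x * (ω₁ * ω₂)⁻¹ = ω₁ * (ω₂ * x * ω₂⁻¹) * ω₁⁻¹ := by group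
    rw [heq]
    exact (conj_mem_J_iff h₁ _).2 ((conj_mem_J_iff h₂ _).2 hx)
  · intro hz
    refine ⟨(ω₁ * ω₂)⁻¹ * z * (ω₁ * ω₂), ?_, by group⟩
    have : (ω₁ * ω₂)⁻¹ * z * (ω₁ * ω₂) = ω₂⁻¹ * (ω₁⁻¹ * z * ω₁) * ω₂ := by group
    rw [this]
    have h1 : ω₁ * (ω₁⁻¹ * z * ω₁) * ω₁⁻¹ ∈ J := by
      have : ω₁ * (ω₁⁻¹ * z * ω₁) * ω₁⁻¹ = z := by group
      rwa [this]
    have hz1 : ω₁⁻¹ * z * ω₁ ∈ J := (conj_mem_J_iff h₁ _).1 h1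
    have h2 : ω₂ * (ω₂⁻¹ * (ω₁⁻¹ * z * ω₁) * ω₂) * ω₂⁻¹ ∈ J := by
      have : ω₂ * (ω₂⁻¹ * (ω₁⁻¹ * z * ω₁) * ω₂) * ω₂⁻¹ = ω₁⁻¹ * z * ω₁ := by group
      rwa [this]
    exact (conj_mem_J_iff h₂ _).1 h2

lemma inv_mem_OmegaF {J : Set G.W} {ω : G.W} (h : ω ∈ OmegaF G J) : ω⁻¹ ∈ OmegaF G J := by
  refine ⟨inv_mem h.1, ?_⟩
  ext z
  constructor
  · rintro ⟨x, hx, rfl⟩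
    have hx' : ω * (ω⁻¹ * x * ω⁻¹⁻¹) * ω⁻¹ ∈ J := by
      have : ω * (ω⁻¹ * x * ω⁻¹⁻¹) * ω⁻¹ = x := by group
      rwa [this]
    exact (conj_mem_J_iff h _).1 hx'
  · intro hz
    exact ⟨ω * z * ω⁻¹, (conj_mem_J_iff h _).2 hz, by group⟩

lemma conj_mem_W0F {J : Set G.W} {ω : G.W} (hω : ω ∈ OmegaF G J) {u : G.W}
    (hu : u ∈ W0F G.toExtAffWeylRoots J) : ω * u * ω⁻¹ ∈ W0F G.toExtAffWeylRoots J := by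
  induction hu using Subgroup.closure_induction with
  | mem s hs => exact Subgroup.subset_closure ((conj_mem_J_iff hω s).2 hs)
  | one => simpa using one_mem _
  | mul x y hx hy ihx ihy =>
      have : ω * (x * y) * ω⁻¹ = (ω * x * ω⁻¹) * (ω * y * ω⁻¹) := by group
      rw [this]; exact mul_mem ihx ihy
  | inv x hx ihx =>
      have : ω * x⁻¹ * ω⁻¹ = (ω * x * ω⁻¹)⁻¹ := by group
      rw [this]; exact inv_mem ihx

lemma OmegaF_subset_WF {J : Set G.W} : OmegaF G J ⊆ (WF G J : Set G.W) :=
  fun _ h => Subgroup.subset_closure (Or.inr h)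

lemma J_subset_WF {J : Set G.W} : J ⊆ (WF G J : Set G.W) :=
  fun _ h => Subgroup.subset_closure (Or.inl h)

lemma W0F_le_WF {J : Set G.W} : W0F G.toExtAffWeylRoots J ≤ WF G J :=
  (Subgroup.closure_le _).2 J_subset_WF

lemma WF_decomp {J : Set G.W} {w : G.W} (hw : w ∈ WF G J) :
    ∃ ω ∈ OmegaF G J, ∃ u ∈ W0F G.toExtAffWeylRoots J, w = ω * u := by
  let P : Subgroup G.W :=
    { carrier := {w | ∃ ω ∈ OmegaF G J, ∃ u ∈ W0F G.toExtAffWeylRoots J, w = ω * u}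
      one_mem' := ⟨1, one_mem_OmegaF, 1, one_mem _, by simp⟩
      mul_mem' := by
        rintro a b ⟨ω, hω, u, hu, rfl⟩ ⟨ω', hω', u', hu', rfl⟩
        refine ⟨ω * ω', mul_mem_OmegaF hω hω', (ω'⁻¹ * u * ω') * u',
          mul_mem ?_ hu', by group⟩
        have := conj_mem_W0F (inv_mem_OmegaF hω') hu
        simpa using this
      inv_mem' := by
        rintro a ⟨ω, hω, u, hu, rfl⟩
        refine ⟨ω⁻¹, inv_mem_OmegaF hω, ω * u⁻¹ * ω⁻¹, conj_mem_W0F hω (inv_mem hu),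
          by group⟩ }
  have hle : WF G J ≤ P := by
    rw [WF, Subgroup.closure_le]
    rintro x (hx | hx)
    · exact ⟨1, one_mem_OmegaF, x, Subgroup.subset_closure hx, by simp⟩
    · exact ⟨x, hx, 1, one_mem _, by simp⟩
  exact hle hw

lemma Qperp_subset_OmegaF {J : Set G.W} {q : G.W} (hq : q ∈ G.Qperp) : q ∈ OmegaF G J := by
  have hcen : ∀ x : G.W, q * x * q⁻¹ = x := by
    intro x
    have h' := (Subgroup.mem_center_iff.mp (G.Qperp_central hq)) x
    rw [← h']; group
  refine ⟨?_, ?_⟩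
  · have : q ∈ {w : G.W | G.len w = 0} := G.Qperp_len q hq
    rw [← G.Omega_eq] at this
    exact this
  · have : (fun x => q * x * q⁻¹) = id := funext hcen
    rw [this, Set.image_id]
/-! #### Hecke algebra lemmas -/

variable {R : Type} [CommRing R] (𝓗 : GenericHecke R G.toExtAffWeyl)

lemma T_one : 𝓗.T 1 = 1 := by
  have h : LinearMap.mulLeft (Rab R) (𝓗.T 1) = LinearMap.id := by
    apply 𝓗.basis.ext
    intro w
    rw [𝓗.basis_eq]
    simp only [LinearMap.mulLeft_apply, LinearMap.id_coe, id_eq]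
    rw [𝓗.braid 1 w (by simp [len_one]), one_mul]
  have h1 := LinearMap.congr_fun h 1
  simpa using h1

lemma Ts_sq {s : G.W} (hs : s ∈ G.S) :
    𝓗.T s * 𝓗.T s = (aa R + bb R) • 𝓗.T s - (aa R * bb R) • (1 : 𝓗.H) := by
  have h := 𝓗.quad s hs
  set A := algebraMap (Rab R) 𝓗.H (aa R) with hA
  set B := algebraMap (Rab R) 𝓗.H (bb R) with hB
  have h3 : 𝓗.T s * 𝓗.T s = 𝓗.T s * B + A * 𝓗.T s - A * B := by
    rw [← sub_eq_zero, ← h]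
    noncomm_ring
  rw [h3, Algebra.smul_def, Algebra.smul_def, map_add, map_mul, add_mul, mul_one,
    ← hA, ← hB, ← Algebra.commutes (bb R) (𝓗.T s), ← hB]
  abel

/-- The left coset `y·W_aff` as a set. -/
def cosSet (G : ExtAffWeylQ) (y : G.W) : Set G.W := {x | y⁻¹ * x ∈ G.Waff}

lemma mem_cos_self (y : G.W) : y ∈ cosSet G y := by
  show y⁻¹ * y ∈ G.Waff
  rw [inv_mul_cancel]
  exact one_mem _

lemma op_eq_of_mem_cos {y z : G.W} (hz : z ∈ cosSet G y) : (op G z).1 = (op G y).1 := by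
  have hδ : y⁻¹ * z ∈ G.Waff := hz
  have hzy : z = y * (y⁻¹ * z) := by group
  conv_lhs => rw [hzy]
  rw [op_mul, op_waff G hδ, mul_one]

lemma simple_mem_S (i : G.B) : ((G.cs.simple i : G.Waff) : G.W) ∈ G.S := by
  rw [G.S_eq]; exact ⟨i, rfl⟩

lemma T_mul_Ts_mem {y x : G.W} (hx : x ∈ cosSet G y) (i : G.B) :
    𝓗.T x * 𝓗.T ((G.cs.simple i : G.Waff) : G.W) ∈
      Submodule.span (Rab R) (𝓗.T '' cosSet G (y * ((G.cs.simple i : G.Waff) : G.W))) := by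
  have hlen2 := len_mul_simple G x i
  set s : G.W := ((G.cs.simple i : G.Waff) : G.W) with hsdef
  have hs : s ∈ G.S := simple_mem_S i
  have hsW : s ∈ G.Waff := G.S_sub s hs
  have h1 : x * s ∈ cosSet G (y * s) := by
    show (y * s)⁻¹ * (x * s) ∈ G.Waff
    have heq : (y * s)⁻¹ * (x * s) = s⁻¹ * (y⁻¹ * x) * s := by group
    rw [heq]
    exact mul_mem (mul_mem (inv_mem hsW) hx) hsW
  have h2 : x ∈ cosSet G (y * s) := by
    show (y * s)⁻¹ * x ∈ G.Waff
    have heq : (y * s)⁻¹ * x = s⁻¹ * (y⁻¹ * x) := by group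
    rw [heq]
    exact mul_mem (inv_mem hsW) hx
  rcases hlen2 with h | h
  · rw [𝓗.braid x s (by rw [len_s G hs]; exact h)]
    exact Submodule.subset_span ⟨x * s, h1, rfl⟩
  · have hxs : x * s * s = x := by rw [mul_assoc, s_mul_s G hs, mul_one]
    have hb : 𝓗.T (x * s) * 𝓗.T s = 𝓗.T x := by
      rw [𝓗.braid (x * s) s (by rw [len_s G hs, hxs]; omega), hxs]
    have hcalc : 𝓗.T x * 𝓗.T s
        = (aa R + bb R) • 𝓗.T x - (aa R * bb R) • 𝓗.T (x * s) := by
      calc 𝓗.T x * 𝓗.T s = 𝓗.T (x * s) * (𝓗.T s * 𝓗.T s) := by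
            rw [← mul_assoc, hb]
        _ = (aa R + bb R) • (𝓗.T (x * s) * 𝓗.T s) - (aa R * bb R) • 𝓗.T (x * s) := by
            rw [Ts_sq 𝓗 hs, mul_sub, mul_smul_comm, mul_smul_comm, mul_one]
        _ = _ := by rw [hb]
    rw [hcalc]
    exact sub_mem (Submodule.smul_mem _ _ (Submodule.subset_span ⟨x, h2, rfl⟩))
      (Submodule.smul_mem _ _ (Submodule.subset_span ⟨x * s, h1, rfl⟩))

lemma span_mul_Ts {y : G.W} {z : 𝓗.H}
    (hz : z ∈ Submodule.span (Rab R) (𝓗.T '' cosSet G y)) (i : G.B) :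
    z * 𝓗.T ((G.cs.simple i : G.Waff) : G.W) ∈
      Submodule.span (Rab R) (𝓗.T '' cosSet G (y * ((G.cs.simple i : G.Waff) : G.W))) := by
  induction hz using Submodule.span_induction with
  | mem x hx =>
      obtain ⟨x', hx', rfl⟩ := hx
      exact T_mul_Ts_mem 𝓗 hx' i
  | zero => rw [zero_mul]; exact zero_mem _
  | add a b _ _ iha ihb => rw [add_mul]; exact add_mem iha ihb
  | smul c a _ iha => rw [smul_mul_assoc]; exact Submodule.smul_mem _ _ iha

lemma T_mul_Twaff (u : G.Waff) (y : G.W) :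
    𝓗.T y * 𝓗.T (u : G.W) ∈
      Submodule.span (Rab R) (𝓗.T '' cosSet G (y * (u : G.W))) := by
  suffices H : ∀ (n : ℕ) (u : G.Waff) (y : G.W), G.cs.length u = n →
      𝓗.T y * 𝓗.T (u : G.W) ∈
        Submodule.span (Rab R) (𝓗.T '' cosSet G (y * (u : G.W))) from H _ u y rfl
  intro n
  induction n using Nat.strong_induction_on with
  | _ n ih =>
    intro u y hlen
    by_cases hu1 : u = 1
    · subst hu1
      simp only [OneMemClass.coe_one, mul_one]
      rw [T_one 𝓗, mul_one]
      exact Submodule.subset_span ⟨y, mem_cos_self y, rfl⟩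
    · obtain ⟨i, hi⟩ := G.cs.exists_rightDescent_of_ne_one hu1
      set u₁ : G.Waff := u * G.cs.simple i with hu₁
      have hlen1 : G.cs.length u₁ + 1 = G.cs.length u := by
        rcases G.cs.length_mul_simple u i with h | h
        · exfalso; have := hi; unfold CoxeterSystem.IsRightDescent at this; omega
        · exact h
      have hmul : u₁ * G.cs.simple i = u := by
        rw [hu₁, mul_assoc, G.cs.simple_mul_simple_self, mul_one]
      have hcoe : (u : G.W) = (u₁ : G.W) * ((G.cs.simple i : G.Waff) : G.W) := by
        rw [← hmul, Subgroup.coe_mul]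
      have hTu : 𝓗.T (u : G.W)
          = 𝓗.T (u₁ : G.W) * 𝓗.T ((G.cs.simple i : G.Waff) : G.W) := by
        rw [𝓗.braid (u₁ : G.W) ((G.cs.simple i : G.Waff) : G.W) ?_, ← Subgroup.coe_mul, hmul]
        rw [← Subgroup.coe_mul, hmul, len_coe_waff, len_coe_waff,
          len_s G (simple_mem_S i), ← hlen1]
      have ihτ := ih (G.cs.length u₁) (by omega) u₁ y rfl
      have hstep := span_mul_Ts 𝓗 ihτ i
      rw [hTu, ← mul_assoc]
      have hyassoc : y * (u₁ : G.W) * ((G.cs.simple i : G.Waff) : G.W) = y * (u : G.W) := by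
        rw [mul_assoc, ← hcoe]
      rwa [hyassoc] at hstep

lemma T_mul_T_mem (v w : G.W) :
    𝓗.T v * 𝓗.T w ∈ Submodule.span (Rab R) (𝓗.T '' cosSet G (v * w)) := by
  have hw := op_spec G w
  set ω := (op G w).1 with hω
  set a := (op G w).2 with ha
  have h1 : 𝓗.T w = 𝓗.T (ω : G.W) * 𝓗.T (a : G.W) := by
    rw [𝓗.braid (ω : G.W) (a : G.W)
      (by rw [G.len_omul _ ω.2, len_omega_zero G ω.2, Nat.zero_add]), hw]
  have h2 : 𝓗.T v * 𝓗.T (ω : G.W) = 𝓗.T (v * (ω : G.W)) := by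
    exact 𝓗.braid v (ω : G.W)
      (by rw [G.len_mulo _ ω.2, len_omega_zero G ω.2, Nat.add_zero])
  have h3 := T_mul_Twaff 𝓗 a (v * (ω : G.W))
  rw [h1, ← mul_assoc, h2]
  rwa [mul_assoc, hw] at h3
end Stmt10

end Aux

open Stmt10 in
/-- The map `T_w ↦ ε_F(w) T_w` on `H_F` is an involutive
`R[a,b]`-algebra automorphism `j_F` of `H_F` which acts trivially on `𝔷`. -/
theorem orientation_twist_is_algebra_involution (R : Type) [CommRing R]
    [IsNoetherianRing R]
    (G : ExtAffWeylQ) (𝓗 : GenericHecke R G.toExtAffWeyl)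
    (J : Set G.W) (hJ : J ⊆ G.S)
    (hfin : Set.Finite ((W0F G.toExtAffWeylRoots J : Subgroup G.W) : Set G.W))
    -- the orientation character `ε_F` of `W_F`:
    (εF : G.W → ℤ)
    (hεval : ∀ w ∈ WF G J, εF w = 1 ∨ εF w = -1)
    (hεmul : ∀ v ∈ WF G J, ∀ w ∈ WF G J, εF (v * w) = εF v * εF w)
    -- elements of `W⁰_F` fix `F` pointwise, hence preserve any orientation of `F`:
    (hεW0F : ∀ w ∈ W0F G.toExtAffWeylRoots J, εF w = 1)
    -- `ε_F` is trivial on `Q^⊥`: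
    (hεQ : ∀ q ∈ G.Qperp, εF q = 1) :
    ∃ jF : HF R G 𝓗 J ≃ₐ[Rab R] HF R G 𝓗 J,
      Function.Involutive jF ∧
      (∀ (w : G.W) (hw : w ∈ WF G J) (hmem : 𝓗.T w ∈ HF R G 𝓗 J),
        jF ⟨𝓗.T w, hmem⟩ = εF w • (⟨𝓗.T w, hmem⟩ : HF R G 𝓗 J)) ∧
      (∀ (z : 𝓗.H) (hz : z ∈ zz R G 𝓗) (hmem : z ∈ HF R G 𝓗 J),
        jF ⟨z, hmem⟩ = ⟨z, hmem⟩) := by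
  classical
  set sgn : G.W → ℤ := fun x =>
    if ((op G x).1 : G.W) ∈ OmegaF G J then εF ((op G x).1 : G.W) else 1 with hsgn
  set j : 𝓗.H →ₗ[Rab R] 𝓗.H :=
    𝓗.basis.constr (Rab R) (fun x => ((sgn x : ℤ) : Rab R) • 𝓗.T x) with hj
  have jT : ∀ x, j (𝓗.T x) = ((sgn x : ℤ) : Rab R) • 𝓗.T x := by
    intro x
    have h := 𝓗.basis.constr_basis (Rab R) (fun x => ((sgn x : ℤ) : Rab R) • 𝓗.T x) x
    rw [𝓗.basis_eq] at h
    exact h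
  have hW0Waff : W0F G.toExtAffWeylRoots J ≤ G.Waff :=
    (Subgroup.closure_le _).2 (fun s hs => G.S_sub s (hJ hs))
  -- `sgn` agrees with `εF` on `W_F`
  have hiw : ∀ w ∈ WF G J, ((op G w).1 : G.W) ∈ OmegaF G J ∧ sgn w = εF w := by
    intro w hw
    obtain ⟨ω, hωF, u, hu, rfl⟩ := WF_decomp hw
    have hop : (op G (ω * u)).1 = ⟨ω, hωF.1⟩ := by
      have h := op_unique G (ω * u) (⟨ω, hωF.1⟩, ⟨u, hW0Waff hu⟩) (by simp)
      exact (congrArg Prod.fst h).symm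
    have hcoe : ((op G (ω * u)).1 : G.W) = ω := by rw [hop]
    refine ⟨by rw [hcoe]; exact hωF, ?_⟩
    have hε : εF (ω * u) = εF ω := by
      rw [hεmul ω (OmegaF_subset_WF hωF) u (W0F_le_WF hu), hεW0F u hu, mul_one]
    rw [hsgn]
    simp only [hcoe, if_pos hωF]
    exact hε.symm
  have sgn_cos : ∀ (y : G.W), ∀ z ∈ cosSet G y, sgn z = sgn y := by
    intro y z hz
    rw [hsgn]
    simp only [op_eq_of_mem_cos hz]
  set WFext : Set G.W := {x | ((op G x).1 : G.W) ∈ OmegaF G J} with hWFext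
  have hWFsub : ∀ w ∈ WF G J, w ∈ WFext := fun w hw => (hiw w hw).1
  have hext_mul : ∀ {x y : G.W}, x ∈ WFext → y ∈ WFext →
      (x * y ∈ WFext ∧ sgn (x * y) = sgn x * sgn y) := by
    intro x y hx hy
    have hopm : ((op G (x * y)).1 : G.W) = ((op G x).1 : G.W) * ((op G y).1 : G.W) := by
      rw [op_mul]; rfl
    have hmem : x * y ∈ WFext := by
      show ((op G (x * y)).1 : G.W) ∈ OmegaF G J
      rw [hopm]; exact mul_mem_OmegaF hx hy
    refine ⟨hmem, ?_⟩
    have hx' : ((op G x).1 : G.W) ∈ OmegaF G J := hx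
    have hy' : ((op G y).1 : G.W) ∈ OmegaF G J := hy
    simp only [hsgn]
    rw [hopm, if_pos (mul_mem_OmegaF hx' hy'), if_pos hx', if_pos hy']
    exact hεmul _ (OmegaF_subset_WF hx) _ (OmegaF_subset_WF hy)
  have hcos_ext : ∀ {x z : G.W}, x ∈ WFext → z ∈ cosSet G x → z ∈ WFext := by
    intro x z hx hz
    show ((op G z).1 : G.W) ∈ OmegaF G J
    rw [op_eq_of_mem_cos hz]
    exact hx
  set M : Submodule (Rab R) 𝓗.H := Submodule.span (Rab R) (𝓗.T '' WFext) with hM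
  have hTTmem : ∀ {x y : G.W}, x ∈ WFext → y ∈ WFext → 𝓗.T x * 𝓗.T y ∈ M := by
    intro x y hx hy
    refine Submodule.span_mono (Set.image_mono ?_) (T_mul_T_mem 𝓗 x y)
    exact fun z hz => hcos_ext (hext_mul hx hy).1 hz
  have hMmul : ∀ z₁ ∈ M, ∀ z₂ ∈ M, z₁ * z₂ ∈ M := by
    intro z₁ hz₁
    induction hz₁ using Submodule.span_induction with
    | mem a ha =>
        obtain ⟨x, hx, rfl⟩ := ha
        intro z₂ hz₂
        induction hz₂ using Submodule.span_induction with
        | mem b hb => obtain ⟨y, hy, rfl⟩ := hb; exact hTTmem hx hy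
        | zero => rw [mul_zero]; exact zero_mem _
        | add a b _ _ iha ihb => rw [mul_add]; exact add_mem iha ihb
        | smul r a _ iha => rw [mul_smul_comm]; exact Submodule.smul_mem _ _ iha
    | zero => intro z₂ _; rw [zero_mul]; exact zero_mem _
    | add a b _ _ iha ihb =>
        intro z₂ hz₂; rw [add_mul]; exact add_mem (iha z₂ hz₂) (ihb z₂ hz₂)
    | smul r a _ iha =>
        intro z₂ hz₂; rw [smul_mul_assoc]; exact Submodule.smul_mem _ _ (iha z₂ hz₂)
  have hone_ext : (1 : G.W) ∈ WFext := by
    show ((op G (1 : G.W)).1 : G.W) ∈ OmegaF G J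
    rw [op_waff G (one_mem _)]
    exact one_mem_OmegaF
  have h1M : (1 : 𝓗.H) ∈ M := by
    rw [← T_one 𝓗]
    exact Submodule.subset_span ⟨1, hone_ext, rfl⟩
  have hHFM : ∀ x ∈ HF R G 𝓗 J, x ∈ M := by
    have hle : HF R G 𝓗 J ≤ M.toSubalgebra h1M (fun x y hx hy => hMmul x hx y hy) := by
      apply Algebra.adjoin_le
      rintro _ ⟨w, hw, rfl⟩
      exact Submodule.subset_span ⟨w, hWFsub w hw, rfl⟩
    exact fun x hx => hle hx
  -- homogeneity of `j` on spans with constant sign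
  have homog : ∀ (c : ℤ) (A : Set G.W), (∀ x ∈ A, sgn x = c) →
      ∀ z ∈ Submodule.span (Rab R) (𝓗.T '' A), j z = ((c : ℤ) : Rab R) • z := by
    intro c A hA z hz
    induction hz using Submodule.span_induction with
    | mem a ha => obtain ⟨x, hx, rfl⟩ := ha; rw [jT, hA x hx]
    | zero => rw [map_zero, smul_zero]
    | add a b _ _ iha ihb => rw [map_add, iha, ihb, smul_add]
    | smul r a _ iha => rw [map_smul, iha, smul_smul, smul_smul, mul_comm]
  have jmulM : ∀ z₁ ∈ M, ∀ z₂ ∈ M, j (z₁ * z₂) = j z₁ * j z₂ := by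
    intro z₁ hz₁
    induction hz₁ using Submodule.span_induction with
    | mem a ha =>
        obtain ⟨x, hx, rfl⟩ := ha
        intro z₂ hz₂
        induction hz₂ using Submodule.span_induction with
        | mem b hb =>
            obtain ⟨y, hy, rfl⟩ := hb
            have hcore := homog (sgn (x * y)) (cosSet G (x * y))
              (fun z hz => sgn_cos _ z hz) _ (T_mul_T_mem 𝓗 x y)
            rw [hcore, jT, jT, smul_mul_smul_comm, ← Int.cast_mul,
              ← (hext_mul hx hy).2]
        | zero => rw [mul_zero, map_zero, mul_zero]
        | add a b _ _ iha ihb => rw [mul_add, map_add, iha, ihb, map_add, mul_add]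
        | smul r a _ iha => rw [mul_smul_comm, map_smul, iha, map_smul, mul_smul_comm]
    | zero => intro z₂ _; rw [zero_mul, map_zero, zero_mul]
    | add a b _ _ iha ihb =>
        intro z₂ hz₂
        rw [add_mul, map_add, iha z₂ hz₂, ihb z₂ hz₂, map_add, add_mul]
    | smul r a _ iha =>
        intro z₂ hz₂
        rw [smul_mul_assoc, map_smul, iha z₂ hz₂, map_smul, smul_mul_assoc]
  have sgn_one : sgn 1 = 1 := by
    rw [hsgn]
    have h1 : (op G (1 : G.W)).1 = 1 := op_waff G (one_mem _)
    simp only [h1, OneMemClass.coe_one, if_pos one_mem_OmegaF]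
    exact hεW0F 1 (one_mem _)
  have j1 : j (1 : 𝓗.H) = 1 := by
    rw [← T_one 𝓗, jT, sgn_one]
    simp
  have jalg : ∀ r : Rab R, j (algebraMap (Rab R) 𝓗.H r) = algebraMap (Rab R) 𝓗.H r := by
    intro r
    rw [Algebra.algebraMap_eq_smul_one, map_smul, j1]
  have sgn_sq : ∀ x, sgn x * sgn x = 1 := by
    intro x
    by_cases hx : ((op G x).1 : G.W) ∈ OmegaF G J
    · have := hεval _ (OmegaF_subset_WF hx)
      rw [hsgn]; simp only [if_pos hx]
      rcases this with h | h <;> rw [h] <;> norm_num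
    · rw [hsgn]; simp only [if_neg hx]; norm_num
  have jj : ∀ z, j (j z) = z := by
    have hcomp : j ∘ₗ j = LinearMap.id := by
      apply 𝓗.basis.ext
      intro x
      rw [LinearMap.comp_apply, 𝓗.basis_eq, jT, map_smul, jT, smul_smul,
        ← Int.cast_mul, sgn_sq x]
      simp
    intro z
    exact LinearMap.congr_fun hcomp z
  have jstab : ∀ x ∈ HF R G 𝓗 J, j x ∈ HF R G 𝓗 J := by
    intro x hx
    induction hx using Algebra.adjoin_induction with
    | mem a ha =>
        obtain ⟨w, hw, rfl⟩ := ha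
        rw [jT]
        exact Subalgebra.smul_mem _ (Algebra.subset_adjoin (show 𝓗.T w ∈ 𝓗.T '' ((WF G J : Subgroup G.W) : Set G.W) from ⟨w, hw, rfl⟩)) _
    | algebraMap r => rw [jalg]; exact Subalgebra.algebraMap_mem _ r
    | add a b _ _ iha ihb => rw [map_add]; exact add_mem iha ihb
    | mul a b ha hb iha ihb =>
        rw [jmulM a (hHFM a ha) b (hHFM b hb)]; exact mul_mem iha ihb
  have jTw : ∀ w ∈ WF G J, j (𝓗.T w) = ((εF w : ℤ) : Rab R) • 𝓗.T w := by
    intro w hw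
    rw [jT, (hiw w hw).2]
  have hzzHF : zz R G 𝓗 ≤ HF R G 𝓗 J :=
    Algebra.adjoin_mono (Set.image_mono
      (fun q hq => OmegaF_subset_WF (Qperp_subset_OmegaF hq)))
  have jfix : ∀ z ∈ zz R G 𝓗, j z = z := by
    intro z hz
    induction hz using Algebra.adjoin_induction with
    | mem a ha =>
        obtain ⟨q, hq, rfl⟩ := ha
        rw [jTw q (OmegaF_subset_WF (Qperp_subset_OmegaF hq)), hεQ q hq]
        simp
    | algebraMap r => exact jalg r
    | add a b _ _ iha ihb => rw [map_add, iha, ihb]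
    | mul a b ha hb iha ihb =>
        rw [jmulM a (hHFM a (hzzHF ha)) b (hHFM b (hzzHF hb)), iha, ihb]
  -- assemble the algebra automorphism
  let jF0 : HF R G 𝓗 J →ₐ[Rab R] HF R G 𝓗 J :=
    { toFun := fun x => ⟨j (x : 𝓗.H), jstab _ x.2⟩
      map_one' := Subtype.ext (by simpa using j1)
      map_mul' := fun x y => Subtype.ext (by
        show j ((x : 𝓗.H) * (y : 𝓗.H)) = j (x : 𝓗.H) * j (y : 𝓗.H)
        exact jmulM _ (hHFM _ x.2) _ (hHFM _ y.2))
      map_zero' := Subtype.ext (by simp)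
      map_add' := fun x y => Subtype.ext (by
        show j ((x : 𝓗.H) + (y : 𝓗.H)) = j (x : 𝓗.H) + j (y : 𝓗.H)
        exact map_add j _ _)
      commutes' := fun r => Subtype.ext (by simpa using jalg r) }
  have hinv : jF0.comp jF0 = AlgHom.id (Rab R) (HF R G 𝓗 J) :=
    AlgHom.ext fun x => Subtype.ext (jj (x : 𝓗.H))
  refine ⟨AlgEquiv.ofAlgHom jF0 jF0 hinv hinv, ?_, ?_, ?_⟩
  · intro x
    exact Subtype.ext (jj (x : 𝓗.H))
  · intro w hw hmem
    apply Subtype.ext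
    show j (𝓗.T w) = ((εF w • (⟨𝓗.T w, hmem⟩ : HF R G 𝓗 J) : HF R G 𝓗 J) : 𝓗.H)
    rw [jTw w hw, Int.cast_smul_eq_zsmul]
    rfl
  · intro z hz hmem
    exact Subtype.ext (jfix z hz)
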